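/- arXiv:2010.16222 — 3 statements merged into one kernel-verified Lean document; each statement's English description precedes it below -/
import Mathlib

section
/- If λ is a one-loop fixed point on ℝ^N that is not identically zero, then ρ_N⁻ ≤ a₀(λ) ≤ ρ_N⁺, where ρ_N⁺ = N(N+2)/(N+8) and ρ_N⁻ = (N/2)(1 − √(1 − 8/(9N))). -/
/-- A quartic coupling on `ℝ^N`: a rank-4 tensor invariant under all
permutations of its four indices. -/
def IsSym4 {N : ℕ} (A : (Fin 4 → Fin N) → ℝ) : Prop :=
  ∀ (σ : Equiv.Perm (Fin 4)) (f : Fin 4 → Fin N), A (f ∘ σ) = A f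

/-- The one-loop fixed point equation
`λ_{ijkl} = ∑_{m,n} (λ_{ijmn}λ_{klmn} + λ_{ikmn}λ_{jlmn} + λ_{ilmn}λ_{jkmn})`. -/
def IsFixedPoint {N : ℕ} (A : (Fin 4 → Fin N) → ℝ) : Prop :=
  ∀ i j k l : Fin N, A ![i, j, k, l] =
    ∑ m : Fin N, ∑ n : Fin N,
      (A ![i, j, m, n] * A ![k, l, m, n] + A ![i, k, m, n] * A ![j, l, m, n]
        + A ![i, l, m, n] * A ![j, k, m, n])

/-- `‖λ‖² = ∑_{i,j,k,l} λ_{ijkl}²`. -/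
def sqnorm {N : ℕ} (A : (Fin 4 → Fin N) → ℝ) : ℝ :=
  ∑ i : Fin N, ∑ j : Fin N, ∑ k : Fin N, ∑ l : Fin N, (A ![i, j, k, l]) ^ 2

/-- `a₀(λ) = ∑_{i,j} λ_{iijj}`. -/
def a0 {N : ℕ} (A : (Fin 4 → Fin N) → ℝ) : ℝ :=
  ∑ i : Fin N, ∑ j : Fin N, A ![i, i, j, j]

/-- `t_{ij}(λ) = ∑_k λ_{ijkk}`. -/
def tmat {N : ℕ} (A : (Fin 4 → Fin N) → ℝ) (i j : Fin N) : ℝ :=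
  ∑ k : Fin N, A ![i, j, k, k]

/-!
Write `s = ‖λ‖²`, `t_{ij} = ∑_k λ_{ijkk}`, and let `Λ` be `λ` viewed as a symmetric matrix on
pairs of indices. Tracing the fixed point equation gives `a₀ = ‖t‖² + 2s`, and contracting it
with `λ` gives `s = 3 tr Λ³`. Three Cauchy–Schwarz inequalities follow: `a₀² ≤ N‖t‖²` for the
trace of `t`; `9a₀² ≤ 3N(N+2)s` by pairing `λ` with the invariant tensor
`δ_{ij}δ_{kl} + δ_{ik}δ_{jl} + δ_{il}δ_{jk}`; and `(tr Λ³)² ≤ ‖Λ‖² ‖Λ²‖² ≤ s³`, so `s ≥ 1/9`.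
Then `a₀ ≥ a₀²/N + 6a₀²/(N(N+2))` gives the upper bound, and `a₀² - N a₀ + 2N/9 ≤ 0` the lower.
-/

open Finset

theorem sq_sum_sum_mul_le {ι κ : Type*} [Fintype ι] [Fintype κ] (f g : ι → κ → ℝ) :
    (∑ i, ∑ j, f i j * g i j) ^ 2 ≤ (∑ i, ∑ j, f i j ^ 2) * ∑ i, ∑ j, g i j ^ 2 := by
  simpa only [Fintype.sum_prod_type] using
    sum_mul_sq_le_sq_mul_sq univ (fun p : ι × κ => f p.1 p.2) (fun p => g p.1 p.2)

theorem sq_sum_sum_sum_sum_mul_le {ι : Type*} [Fintype ι] (f g : ι → ι → ι → ι → ℝ) :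
    (∑ i, ∑ j, ∑ k, ∑ l, f i j k l * g i j k l) ^ 2 ≤
      (∑ i, ∑ j, ∑ k, ∑ l, f i j k l ^ 2) * ∑ i, ∑ j, ∑ k, ∑ l, g i j k l ^ 2 := by
  simpa only [Fintype.sum_prod_type] using
    sq_sum_sum_mul_le (fun p q : ι × ι => f p.1 p.2 q.1 q.2) (fun p q => g p.1 p.2 q.1 q.2)

theorem sq_trace_le_card_mul_sum_sq {n : Type*} [Fintype n] (M : Matrix n n ℝ) :
    M.trace ^ 2 ≤ Fintype.card n * ∑ i, ∑ j, M i j ^ 2 := by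
  calc M.trace ^ 2 ≤ Fintype.card n * ∑ i, M i i ^ 2 := sq_sum_le_card_mul_sum_sq
    _ ≤ _ := by
      gcongr with i
      exact single_le_sum (f := fun j => M i j ^ 2) (fun _ _ => sq_nonneg _) (mem_univ i)

theorem half_mul_one_sub_sqrt_le {b c x : ℝ} (hb : 0 < b) (h : x ^ 2 + c ≤ b * x) :
    b / 2 * (1 - √(1 - 4 * c / b ^ 2)) ≤ x := by
  have hroot : b * √(1 - 4 * c / b ^ 2) = √(b ^ 2 - 4 * c) := by
    rw [show b ^ 2 - 4 * c = b ^ 2 * (1 - 4 * c / b ^ 2) by field_simp,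
      Real.sqrt_mul (sq_nonneg b), Real.sqrt_sq hb.le]
  have : b - 2 * x ≤ √(b ^ 2 - 4 * c) :=
    (le_abs_self _).trans (Real.abs_le_sqrt (by nlinarith))
  linarith

def deltaTensor (ι : Type*) [DecidableEq ι] (i j k l : ι) : ℝ :=
  (if i = j then 1 else 0) * (if k = l then 1 else 0) +
    (if i = k then 1 else 0) * (if j = l then 1 else 0) +
    (if i = l then 1 else 0) * (if j = k then 1 else 0)

theorem sum_mul_deltaTensor {ι : Type*} [Fintype ι] [DecidableEq ι] (T : ι → ι → ι → ι → ℝ) :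
    ∑ i, ∑ j, ∑ k, ∑ l, T i j k l * deltaTensor ι i j k l =
      ∑ i, ∑ j, (T i i j j + T i j i j + T i j j i) := by
  simp [deltaTensor, mul_add, mul_ite, sum_add_distrib, sum_ite_eq]

theorem sum_deltaTensor_sq (ι : Type*) [Fintype ι] [DecidableEq ι] :
    ∑ i : ι, ∑ j, ∑ k, ∑ l, deltaTensor ι i j k l ^ 2 =
      3 * Fintype.card ι ^ 2 + 6 * Fintype.card ι := by
  simp only [sq, sum_mul_deltaTensor]
  simp only [deltaTensor, ↓reduceIte, mul_one, mul_ite, mul_zero, sum_add_distrib, sum_const,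
    card_univ, nsmul_eq_mul, sum_ite_eq, mem_univ, sum_ite_eq']
  ring

variable {N : ℕ} {A : (Fin 4 → Fin N) → ℝ}

namespace IsSym4

theorem apply_eq_of_comp (hA : IsSym4 A) (σ : Equiv.Perm (Fin 4)) {f g : Fin 4 → Fin N}
    (h : g = f ∘ σ) : A g = A f := h ▸ hA σ f

theorem apply_swap_one_two (hA : IsSym4 A) (i j k l : Fin N) : A ![i, k, j, l] = A ![i, j, k, l] :=
  hA.apply_eq_of_comp (Equiv.swap 1 2) (by ext x; fin_cases x <;> rfl)

theorem apply_cycle (hA : IsSym4 A) (i j k l : Fin N) : A ![i, k, l, j] = A ![i, j, k, l] :=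
  hA.apply_eq_of_comp (Equiv.swap 1 3 * Equiv.swap 1 2) (by ext x; fin_cases x <;> rfl)

theorem apply_swap_pairs (hA : IsSym4 A) (i j k l : Fin N) : A ![k, l, i, j] = A ![i, j, k, l] :=
  hA.apply_eq_of_comp ((Equiv.swap 0 2).trans (Equiv.swap 1 3)) (by ext x; fin_cases x <;> rfl)

theorem sum_apply_diag_eq_tmat (hA : IsSym4 A) (m n : Fin N) :
    ∑ i, A ![i, i, m, n] = tmat A m n :=
  sum_congr rfl fun i _ => hA.apply_swap_pairs m n i i

theorem sum_mul_deltaTensor_eq_three_mul_a0 (hA : IsSym4 A) :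
    ∑ i, ∑ j, ∑ k, ∑ l, A ![i, j, k, l] * deltaTensor (Fin N) i j k l = 3 * a0 A := by
  have h2 : ∑ i, ∑ j, A ![i, j, i, j] = a0 A :=
    sum_congr rfl fun i _ => sum_congr rfl fun j _ => hA.apply_swap_one_two i i j j
  have h3 : ∑ i, ∑ j, A ![i, j, j, i] = a0 A :=
    sum_congr rfl fun i _ => sum_congr rfl fun j _ => hA.apply_cycle i i j j
  simp only [sum_mul_deltaTensor, sum_add_distrib, h2, h3]
  unfold a0
  ring

end IsSym4

theorem sqnorm_pos (hne : A ≠ 0) : 0 < sqnorm A := by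
  refine lt_of_le_of_ne (by unfold sqnorm; positivity) (Ne.symm fun h => hne (funext fun f => ?_))
  simp (disch := intros; positivity) only [sqnorm, sum_eq_zero_iff_of_nonneg, mem_univ,
    forall_const, pow_eq_zero_iff] at h
  rw [← FinVec.etaExpand_eq f]
  exact h _ _ _ _

-- The square of `λ` viewed as a symmetric matrix on pairs of indices.
def bubble (A : (Fin 4 → Fin N) → ℝ) (i j k l : Fin N) : ℝ :=
  ∑ m, ∑ n, A ![i, j, m, n] * A ![k, l, m, n]

theorem IsFixedPoint.apply_eq_bubble (hfp : IsFixedPoint A) (i j k l : Fin N) :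
    A ![i, j, k, l] = bubble A i j k l + bubble A i k j l + bubble A i l j k := by
  simp only [bubble, ← sum_add_distrib]
  exact hfp i j k l

theorem a0_eq_sum_tmat_sq_add (hA : IsSym4 A) (hfp : IsFixedPoint A) :
    a0 A = ∑ i, ∑ j, tmat A i j ^ 2 + 2 * sqnorm A := by
  have hdiag : ∑ i, ∑ k, bubble A i i k k = ∑ m, ∑ n, tmat A m n ^ 2 := by
    calc ∑ i, ∑ k, bubble A i i k k
        = ∑ m, ∑ n, ∑ i, ∑ k, A ![i, i, m, n] * A ![k, k, m, n] := by
          simp only [bubble]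
          rw [sum_comm_cycle]
          exact sum_congr rfl fun m _ => sum_comm_cycle
      _ = ∑ m, ∑ n, tmat A m n ^ 2 := by
          simp only [← sum_mul_sum, hA.sum_apply_diag_eq_tmat, sq]
  have hoff : ∑ i, ∑ k, bubble A i k i k = sqnorm A := by
    simp only [bubble, sqnorm, sq]
  calc a0 A = ∑ i, ∑ k, (bubble A i i k k + 2 * bubble A i k i k) := by
        unfold a0; simp only [hfp.apply_eq_bubble]; ring_nf
    _ = _ := by simp only [sum_add_distrib, ← mul_sum, hdiag, hoff]

theorem sqnorm_eq_three_mul_sum_mul_bubble (hA : IsSym4 A) (hfp : IsFixedPoint A) :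
    sqnorm A = 3 * ∑ i, ∑ j, ∑ k, ∑ l, A ![i, j, k, l] * bubble A i j k l := by
  have h2 : ∑ i, ∑ j, ∑ k, ∑ l, A ![i, j, k, l] * bubble A i k j l =
      ∑ i, ∑ j, ∑ k, ∑ l, A ![i, j, k, l] * bubble A i j k l := by
    refine sum_congr rfl fun i _ => ?_
    rw [sum_comm]
    simp only [hA.apply_swap_one_two]
  have h3 : ∑ i, ∑ j, ∑ k, ∑ l, A ![i, j, k, l] * bubble A i l j k =
      ∑ i, ∑ j, ∑ k, ∑ l, A ![i, j, k, l] * bubble A i j k l := by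
    refine sum_congr rfl fun i _ => ?_
    rw [sum_comm_cycle]
    refine sum_congr rfl fun j _ => sum_congr rfl fun k _ => sum_congr rfl fun l _ => ?_
    rw [hA.apply_cycle]
  calc sqnorm A = ∑ i, ∑ j, ∑ k, ∑ l, A ![i, j, k, l] *
        (bubble A i j k l + bubble A i k j l + bubble A i l j k) := by
        simp only [sqnorm, sq, ← hfp.apply_eq_bubble]
    _ = _ := by simp only [mul_add, sum_add_distrib, h2, h3]; ring

theorem sum_bubble_sq_le (A : (Fin 4 → Fin N) → ℝ) :
    ∑ i, ∑ j, ∑ k, ∑ l, bubble A i j k l ^ 2 ≤ sqnorm A ^ 2 := by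
  calc ∑ i, ∑ j, ∑ k, ∑ l, bubble A i j k l ^ 2
      ≤ ∑ i, ∑ j, ∑ k, ∑ l,
          (∑ m, ∑ n, A ![i, j, m, n] ^ 2) * ∑ m, ∑ n, A ![k, l, m, n] ^ 2 := by
        gcongr with i _ j _ k _ l _
        exact sq_sum_sum_mul_le _ _
    _ = sqnorm A ^ 2 := by
        rw [sq]; simp only [sqnorm, ← mul_sum, ← sum_mul]

theorem sq_sum_mul_bubble_le (A : (Fin 4 → Fin N) → ℝ) :
    (∑ i, ∑ j, ∑ k, ∑ l, A ![i, j, k, l] * bubble A i j k l) ^ 2 ≤ sqnorm A ^ 3 :=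
  calc _ ≤ sqnorm A * ∑ i, ∑ j, ∑ k, ∑ l, bubble A i j k l ^ 2 := sq_sum_sum_sum_sum_mul_le _ _
    _ ≤ sqnorm A * sqnorm A ^ 2 := by
        gcongr
        · unfold sqnorm; positivity
        · exact sum_bubble_sq_le A
    _ = sqnorm A ^ 3 := by ring

theorem one_ninth_le_sqnorm (hA : IsSym4 A) (hfp : IsFixedPoint A) (hne : A ≠ 0) :
    1 / 9 ≤ sqnorm A := by
  have hpos := sqnorm_pos hne
  have hcube := sq_sum_mul_bubble_le A
  rw [sqnorm_eq_three_mul_sum_mul_bubble hA hfp] at hpos hcube ⊢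
  set T := ∑ i, ∑ j, ∑ k, ∑ l, A ![i, j, k, l] * bubble A i j k l
  have hT : 0 < T := by linarith
  nlinarith [mul_pos hT hT]

theorem sq_a0_le_card_mul_sum_tmat_sq (A : (Fin 4 → Fin N) → ℝ) :
    a0 A ^ 2 ≤ N * ∑ i, ∑ j, tmat A i j ^ 2 := by
  have h := sq_trace_le_card_mul_sum_sq (Matrix.of (tmat A))
  rw [Fintype.card_fin] at h
  exact h

theorem three_mul_sq_a0_le (hA : IsSym4 A) : 3 * a0 A ^ 2 ≤ N * (N + 2) * sqnorm A := by
  have h := sq_sum_sum_sum_sum_mul_le (fun i j k l => A ![i, j, k, l]) (deltaTensor (Fin N))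
  rw [hA.sum_mul_deltaTensor_eq_three_mul_a0, sum_deltaTensor_sq, Fintype.card_fin] at h
  change _ ≤ sqnorm A * _ at h
  linarith

theorem fixedPoint_a0_bounds_general {N : ℕ}
    (A : (Fin 4 → Fin N) → ℝ) (hA : IsSym4 A) (hfp : IsFixedPoint A)
    (hne : A ≠ 0) :
    (N : ℝ) / 2 * (1 - Real.sqrt (1 - 8 / (9 * (N : ℝ)))) ≤ a0 A ∧
      a0 A ≤ (N : ℝ) * ((N : ℝ) + 2) / ((N : ℝ) + 8) := by
  set P := ∑ i, ∑ j, tmat A i j ^ 2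
  have htrace : a0 A = P + 2 * sqnorm A := a0_eq_sum_tmat_sq_add hA hfp
  have hP : 0 ≤ P := by positivity
  have htmat : a0 A ^ 2 ≤ N * P := sq_a0_le_card_mul_sum_tmat_sq A
  have hdelta : 3 * a0 A ^ 2 ≤ N * (N + 2) * sqnorm A := three_mul_sq_a0_le hA
  have hs : 1 / 9 ≤ sqnorm A := one_ninth_le_sqnorm hA hfp hne
  have ha : 0 < a0 A := by linarith
  have hNpos : (0 : ℝ) < N := by nlinarith
  constructor
  · have hquad : a0 A ^ 2 + 2 * N / 9 ≤ N * a0 A := by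
      nlinarith [mul_le_mul_of_nonneg_left hs hNpos.le]
    have hlow := half_mul_one_sub_sqrt_le hNpos hquad
    rwa [show 4 * (2 * (N : ℝ) / 9) / (N : ℝ) ^ 2 = 8 / (9 * N) by field_simp; ring] at hlow
  · have hkey : (N + 8) * a0 A ^ 2 ≤ N * (N + 2) * (P + 2 * sqnorm A) := by
      nlinarith [mul_le_mul_of_nonneg_left htmat (by positivity : (0 : ℝ) ≤ N + 2)]
    rw [← htrace] at hkey
    rw [le_div_iff₀ (by positivity)]
    nlinarith

/-- for a nonzero one-loop fixed point, `ρ_N⁻ ≤ a₀(λ) ≤ ρ_N⁺`, where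
`ρ_N⁺ = N(N+2)/(N+8)` and `ρ_N⁻ = (N/2)(1 − √(1 − 8/(9N)))`. -/
theorem fixedPoint_a0_bounds {N : ℕ} (hN : 1 ≤ N)
    (A : (Fin 4 → Fin N) → ℝ) (hA : IsSym4 A) (hfp : IsFixedPoint A)
    (hne : A ≠ 0) :
    (N : ℝ) / 2 * (1 - Real.sqrt (1 - 8 / (9 * (N : ℝ)))) ≤ a0 A ∧
      a0 A ≤ (N : ℝ) * ((N : ℝ) + 2) / ((N : ℝ) + 8) :=
  fixedPoint_a0_bounds_general A hA hfp hne
end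

section
/- If N = 2 or N = 3 and λ is a one-loop fixed point on ℝ^N, then ‖λ‖² ≤ 3N(N+2)/(N+8)², i.e. ‖λ‖² ≤ 6/25 for N = 2 and ‖λ‖² ≤ 45/121 for N = 3; this is the value of ‖λ‖² at the O(N) fixed point. -/
section

variable {N : ℕ}

noncomputable def onValue (n : ℝ) : ℝ := 3 * n * (n + 2) / (n + 8) ^ 2

def tsqnorm (A : (Fin 4 → Fin N) → ℝ) : ℝ := ∑ i, ∑ j, tmat A i j ^ 2

/-- The `O(N)`-invariant tensor `G_{ijkl}`; the `O(N)` fixed point is `G / (N + 8)`. -/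
def onTensor (i j k l : Fin N) : ℝ :=
  (if i = j then 1 else 0) * (if k = l then 1 else 0)
    + (if i = k then 1 else 0) * (if j = l then 1 else 0)
    + (if i = l then 1 else 0) * (if j = k then 1 else 0)

lemma sum_mul_onTensor (H : Fin N → Fin N → Fin N → Fin N → ℝ) :
    ∑ i, ∑ j, ∑ k, ∑ l, H i j k l * onTensor i j k l
      = ∑ i, ∑ k, H i i k k + ∑ i, ∑ j, H i j i j + ∑ i, ∑ j, H i j j i := by
  simp [onTensor, mul_add, Finset.sum_add_distrib, mul_ite]

lemma sum_onTensor_sq :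
    ∑ i, ∑ j, ∑ k, ∑ l, onTensor (N := N) i j k l ^ 2 = 3 * N * (N + 2) := by
  simp only [sq, sum_mul_onTensor]
  simp [onTensor, Finset.sum_add_distrib, Finset.sum_ite_eq]
  ring

section Symmetric

variable {A : (Fin 4 → Fin N) → ℝ} (hA : IsSym4 A)
include hA

lemma IsSym4.apply_of_comp_eq (σ : Equiv.Perm (Fin 4)) {f g : Fin 4 → Fin N}
    (h : f ∘ σ = g) : A g = A f :=
  h ▸ hA σ f

lemma IsSym4.swap_pairs (i j k l : Fin N) : A ![i, j, k, l] = A ![k, l, i, j] :=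
  hA.apply_of_comp_eq (Equiv.swap 0 2 * Equiv.swap 1 3) (by ext x; fin_cases x <;> rfl)

lemma IsSym4.swap_middle (i j k l : Fin N) : A ![i, j, k, l] = A ![i, k, j, l] :=
  hA.apply_of_comp_eq (Equiv.swap 1 2) (by ext x; fin_cases x <;> rfl)

lemma IsSym4.swap_last (i j k l : Fin N) : A ![i, j, k, l] = A ![i, j, l, k] :=
  hA.apply_of_comp_eq (Equiv.swap 2 3) (by ext x; fin_cases x <;> rfl)

lemma IsSym4.sum_mul_onTensor :
    ∑ i, ∑ j, ∑ k, ∑ l, A ![i, j, k, l] * onTensor i j k l = 3 * a0 A := by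
  have hijij : ∑ i, ∑ j, A ![i, j, i, j] = a0 A :=
    Finset.sum_congr rfl fun i _ => Finset.sum_congr rfl fun j _ => hA.swap_middle i j i j
  have hijji : ∑ i, ∑ j, A ![i, j, j, i] = a0 A := by
    rw [← hijij]
    exact Finset.sum_congr rfl fun i _ => Finset.sum_congr rfl fun j _ => hA.swap_last i j j i
  rw [_root_.sum_mul_onTensor (fun i j k l => A ![i, j, k, l]), hijij, hijji, a0]
  ring

lemma IsSym4.three_mul_a0_sq_le : 3 * a0 A ^ 2 ≤ N * (N + 2) * sqnorm A := by
  have cs := Finset.sum_mul_sq_le_sq_mul_sq Finset.univ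
    (fun p : Fin N × Fin N × Fin N × Fin N => A ![p.1, p.2.1, p.2.2.1, p.2.2.2])
    (fun p => onTensor p.1 p.2.1 p.2.2.1 p.2.2.2)
  simp only [Fintype.sum_prod_type] at cs
  rw [hA.sum_mul_onTensor, sum_onTensor_sq] at cs
  unfold sqnorm
  linarith

lemma IsFixedPoint.a0_eq (hfp : IsFixedPoint A) : a0 A = tsqnorm A + 2 * sqnorm A := by
  have hcross : ∑ i, ∑ k, ∑ m, ∑ n, A ![i, i, m, n] * A ![k, k, m, n] = tsqnorm A := by
    rw [Finset.sum_comm_cycle]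
    refine Finset.sum_congr rfl fun m _ => ?_
    rw [Finset.sum_comm_cycle]
    refine Finset.sum_congr rfl fun n _ => ?_
    simp only [← Finset.sum_mul_sum, sq, tmat, hA.swap_pairs _ _ m n]
  calc a0 A
      = ∑ i, ∑ k, ∑ m, ∑ n, (A ![i, i, m, n] * A ![k, k, m, n]
          + A ![i, k, m, n] * A ![i, k, m, n] + A ![i, k, m, n] * A ![i, k, m, n]) :=
        Finset.sum_congr rfl fun i _ => Finset.sum_congr rfl fun k _ => hfp i i k k
    _ = tsqnorm A + 2 * sqnorm A := by
        simp only [Finset.sum_add_distrib, hcross, sqnorm, sq]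
        ring

end Symmetric

lemma a0_sq_le_mul_tsqnorm (A : (Fin 4 → Fin N) → ℝ) : a0 A ^ 2 ≤ N * tsqnorm A :=
  calc a0 A ^ 2 = (∑ i, tmat A i i) ^ 2 := rfl
    _ ≤ N * ∑ i, tmat A i i ^ 2 := by
        simpa using sq_sum_le_card_mul_sum_sq (s := Finset.univ) (f := fun i => tmat A i i)
    _ ≤ N * tsqnorm A := by
        gcongr
        exact Finset.sum_le_sum fun i _ => Finset.single_le_sum (f := fun j => tmat A i j ^ 2)
          (fun j _ => sq_nonneg _) (Finset.mem_univ i)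

lemma le_onValue_of_constraints {n a t q : ℝ} (hn : 0 < n) (hn4 : n ≤ 4)
    (ha : a = t + 2 * q) (hat : a ^ 2 ≤ n * t) (haq : 3 * a ^ 2 ≤ n * (n + 2) * q) :
    q ≤ onValue n := by
  have hn2 : 0 < n * (n + 2) := mul_pos hn (by linarith)
  have ht : 0 ≤ t := nonneg_of_mul_nonneg_right (by nlinarith) hn
  have hq : 0 ≤ q := nonneg_of_mul_nonneg_right (by nlinarith) hn2
  have ha0 : 0 ≤ a := by linarith
  have hab : a * (n + 8) ≤ n * (n + 2) := by
    have hsq : a * (a * (n + 8)) ≤ a * (n * (n + 2)) := by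
      have := mul_le_mul_of_nonneg_left hat (by linarith : (0 : ℝ) ≤ n + 2)
      subst ha
      linarith
    rcases ha0.eq_or_lt with rfl | hapos
    · linarith
    · exact le_of_mul_le_mul_left hsq hapos
  have hq2 : 2 * q * n ≤ a * (n - a) := by subst ha; linarith
  -- `a ≤ n (n + 2) / (n + 8) ≤ n / 2` and `a (n - a)` increases on `[0, n / 2]`: here `n ≤ 4` enters.
  have hmax : a * (n - a) * (n + 8) ^ 2 ≤ 6 * n ^ 2 * (n + 2) := by
    linarith [mul_nonneg (sub_nonneg.2 hab) (show 0 ≤ 6 * n - a * (n + 8) by nlinarith)]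
  rw [onValue, le_div_iff₀ (by positivity)]
  nlinarith

theorem IsFixedPoint.sqnorm_le_onValue {A : (Fin 4 → Fin N) → ℝ} (hA : IsSym4 A)
    (hfp : IsFixedPoint A) (hN : 0 < N) (hN4 : N ≤ 4) : sqnorm A ≤ onValue N :=
  le_onValue_of_constraints (by exact_mod_cast hN) (by exact_mod_cast hN4) (hfp.a0_eq hA)
    (a0_sq_le_mul_tsqnorm A) hA.three_mul_a0_sq_le

end

/-- for `N = 2` or `N = 3`, any one-loop fixed point satisfies
`‖λ‖² ≤ 3N(N+2)/(N+8)²`, the value at the `O(N)` fixed point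
(`6/25` for `N = 2`, `45/121` for `N = 3`). -/
theorem fixedPoint_sqnorm_upper_smallN {N : ℕ} (hN : N = 2 ∨ N = 3)
    (A : (Fin 4 → Fin N) → ℝ) (hA : IsSym4 A) (hfp : IsFixedPoint A) :
    sqnorm A ≤ 3 * (N : ℝ) * ((N : ℝ) + 2) / ((N : ℝ) + 8) ^ 2 :=
  hfp.sqnorm_le_onValue hA (by omega) (by omega)
end

section
/- If g is a complex one-loop fixed point on ℂ^N and g is not identically zero, then ‖g‖ ≥ 1/5. -/
/-- `(g ♭ h)_{ijkl} = ∑_{m,n} g_{ijmn} h_{mnkl}`. -/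
noncomputable def cflat {N : ℕ} (g h : Fin N → Fin N → Fin N → Fin N → ℂ) :
    Fin N → Fin N → Fin N → Fin N → ℂ :=
  fun i j k l => ∑ m : Fin N, ∑ n : Fin N, g i j m n * h m n k l

/-- `(g ♯ h)_{ijkl} = ∑_{m,n} g_{imkn} h_{jnlm}`. -/
noncomputable def csharp {N : ℕ} (g h : Fin N → Fin N → Fin N → Fin N → ℂ) :
    Fin N → Fin N → Fin N → Fin N → ℂ :=
  fun i j k l => ∑ m : Fin N, ∑ n : Fin N, g i m k n * h j n l m

/-- `P(A)_{ijkl} = (A_{ijkl} + A_{jikl} + A_{ijlk} + A_{jilk})/4`. -/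
noncomputable def cP {N : ℕ} (A : Fin N → Fin N → Fin N → Fin N → ℂ) :
    Fin N → Fin N → Fin N → Fin N → ℂ :=
  fun i j k l => (A i j k l + A j i k l + A i j l k + A j i l k) / 4

/-- `‖g‖² = ∑_{i,j,k,l} |g_{ijkl}|²`. -/
noncomputable def csqnorm {N : ℕ} (g : Fin N → Fin N → Fin N → Fin N → ℂ) : ℝ :=
  ∑ i : Fin N, ∑ j : Fin N, ∑ k : Fin N, ∑ l : Fin N, ‖g i j k l‖ ^ 2

/-- A complex quartic coupling on `ℂ^N`: symmetric under `i ↔ j` and `k ↔ l`,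
and satisfying the reality condition `conj g_{ijkl} = g_{klij}`. -/
def IsCplxCoupling {N : ℕ} (g : Fin N → Fin N → Fin N → Fin N → ℂ) : Prop :=
  (∀ i j k l, g i j k l = g j i k l) ∧ (∀ i j k l, g i j k l = g i j l k) ∧
    (∀ i j k l, (starRingEnd ℂ) (g i j k l) = g k l i j)

/-- The complex one-loop fixed point equation `g = P(g ♭ g + 4 g ♯ g)`. -/
def IsCplxFixedPoint {N : ℕ} (g : Fin N → Fin N → Fin N → Fin N → ℂ) : Prop :=
  IsCplxCoupling g ∧
    ∀ i j k l, g i j k l =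
      cP (fun a b c d => cflat g g a b c d + 4 * csharp g g a b c d) i j k l

/-!
Measure a four-index tensor by the Frobenius norm of the matrix with rows `(i, j)` and columns
`(k, l)`: this is `‖g‖`, and it does not change when the four indices are permuted. Hence `P`,
an average of four index permutations, does not increase it, while `g ♭ g` and (after regrouping
indices) `g ♯ g` are matrix products, bounded by `‖g‖²` by submultiplicativity of the Frobenius
norm. A fixed point therefore satisfies `‖g‖ ≤ 5 ‖g‖²`.
-/

attribute [local instance] Matrix.frobeniusNormedAddCommGroup Matrix.frobeniusNormedSpace

section

variable {N : ℕ}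

def pairMatrix (g : Fin N → Fin N → Fin N → Fin N → ℂ) :
    Matrix (Fin N × Fin N) (Fin N × Fin N) ℂ :=
  fun p q => g p.1 p.2 q.1 q.2

lemma norm_pairMatrix (g : Fin N → Fin N → Fin N → Fin N → ℂ) :
    ‖pairMatrix g‖ = √(csqnorm g) := by
  rw [Matrix.frobenius_norm_def, Real.sqrt_eq_rpow]
  simp [csqnorm, pairMatrix, Fintype.sum_prod_type]

lemma pairMatrix_injective : Function.Injective (pairMatrix (N := N)) := by
  intro g h hgh
  funext i j k l
  exact congrFun (congrFun hgh (i, j)) (k, l)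

lemma norm_pairMatrix_comp_equiv (g : Fin N → Fin N → Fin N → Fin N → ℂ)
    (e : Fin N × Fin N × Fin N × Fin N ≃ Fin N × Fin N × Fin N × Fin N) :
    ‖pairMatrix (fun i j k l => g (e (i, j, k, l)).1 (e (i, j, k, l)).2.1 (e (i, j, k, l)).2.2.1
      (e (i, j, k, l)).2.2.2)‖ = ‖pairMatrix g‖ := by
  rw [norm_pairMatrix, norm_pairMatrix]
  congr 1
  simpa [csqnorm, Fintype.sum_prod_type] using
    e.sum_comp fun p => ‖g p.1 p.2.1 p.2.2.1 p.2.2.2‖ ^ 2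

lemma norm_pairMatrix_cP_le (A : Fin N → Fin N → Fin N → Fin N → ℂ) :
    ‖pairMatrix (cP A)‖ ≤ ‖pairMatrix A‖ := by
  have hsplit : pairMatrix (cP A) = (4 : ℂ)⁻¹ • (pairMatrix A +
      pairMatrix (fun i j k l => A j i k l) + pairMatrix (fun i j k l => A i j l k) +
      pairMatrix (fun i j k l => A j i l k)) := by
    ext p q
    simp only [pairMatrix, cP, Matrix.smul_apply, Matrix.add_apply, smul_eq_mul]
    ring
  have h12 : ‖pairMatrix (fun i j k l => A j i k l)‖ = ‖pairMatrix A‖ :=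
    norm_pairMatrix_comp_equiv A (Function.Involutive.toPerm (fun p => (p.2.1, p.1, p.2.2))
      fun _ => rfl)
  have h34 : ‖pairMatrix (fun i j k l => A i j l k)‖ = ‖pairMatrix A‖ :=
    norm_pairMatrix_comp_equiv A (Function.Involutive.toPerm
      (fun p => (p.1, p.2.1, p.2.2.2, p.2.2.1)) fun _ => rfl)
  have h1234 : ‖pairMatrix (fun i j k l => A j i l k)‖ = ‖pairMatrix A‖ :=
    norm_pairMatrix_comp_equiv A (Function.Involutive.toPerm
      (fun p => (p.2.1, p.1, p.2.2.2, p.2.2.1)) fun _ => rfl)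
  rw [hsplit, norm_smul, norm_inv, Complex.norm_ofNat]
  have := norm_add₄_le (a := pairMatrix A) (b := pairMatrix (fun i j k l => A j i k l))
    (c := pairMatrix (fun i j k l => A i j l k)) (d := pairMatrix (fun i j k l => A j i l k))
  rw [h12, h34, h1234] at this
  linarith

lemma pairMatrix_cflat (g : Fin N → Fin N → Fin N → Fin N → ℂ) :
    pairMatrix (cflat g g) = pairMatrix g * pairMatrix g := by
  ext p q
  simp [pairMatrix, cflat, Matrix.mul_apply, Fintype.sum_prod_type]

lemma norm_pairMatrix_csharp_le (g : Fin N → Fin N → Fin N → Fin N → ℂ) :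
    ‖pairMatrix (csharp g g)‖ ≤ ‖pairMatrix g‖ ^ 2 := by
  let swap23 : Fin N × Fin N × Fin N × Fin N ≃ Fin N × Fin N × Fin N × Fin N :=
    Function.Involutive.toPerm (fun p => (p.1, p.2.2.1, p.2.1, p.2.2.2)) fun _ => rfl
  have hmul : pairMatrix (fun i k j l => csharp g g i j k l) =
      pairMatrix (fun i k m n => g i m k n) * pairMatrix (fun m n j l => g j n l m) := by
    ext p q
    simp [pairMatrix, csharp, Matrix.mul_apply, Fintype.sum_prod_type]
  have hleft : ‖pairMatrix (fun i k m n => g i m k n)‖ = ‖pairMatrix g‖ :=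
    norm_pairMatrix_comp_equiv g swap23
  have hright : ‖pairMatrix (fun m n j l => g j n l m)‖ = ‖pairMatrix g‖ :=
    norm_pairMatrix_comp_equiv g
      ⟨fun p => (p.2.2.1, p.2.1, p.2.2.2, p.1), fun p => (p.2.2.2, p.2.1, p.1, p.2.2.1),
        fun _ => rfl, fun _ => rfl⟩
  calc ‖pairMatrix (csharp g g)‖ = ‖pairMatrix (fun i k j l => csharp g g i j k l)‖ :=
        (norm_pairMatrix_comp_equiv (csharp g g) swap23).symm
    _ ≤ ‖pairMatrix g‖ ^ 2 := by
        rw [hmul, sq]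
        exact (Matrix.frobenius_norm_mul _ _).trans_eq (by rw [hleft, hright])

lemma norm_pairMatrix_le_of_isCplxFixedPoint {g : Fin N → Fin N → Fin N → Fin N → ℂ}
    (hg : IsCplxFixedPoint g) : ‖pairMatrix g‖ ≤ 5 * ‖pairMatrix g‖ ^ 2 := by
  have hfix : g = cP (fun i j k l => cflat g g i j k l + 4 * csharp g g i j k l) := by
    funext i j k l
    exact hg.2 i j k l
  have hflat : ‖pairMatrix (cflat g g)‖ ≤ ‖pairMatrix g‖ ^ 2 := by
    rw [pairMatrix_cflat, sq]
    exact Matrix.frobenius_norm_mul _ _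
  calc ‖pairMatrix g‖
      ≤ ‖pairMatrix (cflat g g) + (4 : ℂ) • pairMatrix (csharp g g)‖ := by
        conv_lhs => rw [hfix]
        exact norm_pairMatrix_cP_le _
    _ ≤ ‖pairMatrix (cflat g g)‖ + 4 * ‖pairMatrix (csharp g g)‖ := by
        grw [norm_add_le, norm_smul, Complex.norm_ofNat]
    _ ≤ 5 * ‖pairMatrix g‖ ^ 2 := by
        linarith [norm_pairMatrix_csharp_le g]

end

theorem cplxFixedPoint_norm_lower_bound_general {N : ℕ}
    (g : Fin N → Fin N → Fin N → Fin N → ℂ) (hfp : IsCplxFixedPoint g)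
    (hne : g ≠ 0) :
    (1 : ℝ) / 5 ≤ Real.sqrt (csqnorm g) := by
  rw [← norm_pairMatrix]
  have hpos : 0 < ‖pairMatrix g‖ := norm_pos_iff.2 (pairMatrix_injective.ne hne)
  nlinarith [norm_pairMatrix_le_of_isCplxFixedPoint hfp]

/-- any nonzero complex one-loop fixed point has `‖g‖ ≥ 1/5`. -/
theorem cplxFixedPoint_norm_lower_bound {N : ℕ} (hN : 1 ≤ N)
    (g : Fin N → Fin N → Fin N → Fin N → ℂ) (hfp : IsCplxFixedPoint g)
    (hne : g ≠ 0) :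
    (1 : ℝ) / 5 ≤ Real.sqrt (csqnorm g) :=
  cplxFixedPoint_norm_lower_bound_general g hfp hne
end
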